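/- arXiv:2605.07373 — 2 statements merged into one kernel-verified Lean document; each statement's English description precedes it below -/
import Mathlib

section
/- For every step labelled transition system with divergence and all processes p, q: if p ⊑_ω q, then p ≲^F q, where p ≲^F q means that every finite synchronization tree t over Stp with t ≲ p also satisfies t ≲ q. -/
/-- A labelled transition system with divergence over a type `Lab` of labels. -/
structure LTS (Lab : Type) where
  Proc : Type
  Trans : Proc → Lab → Proc → Prop
  Div : Proc → Prop

namespace LTS

variable {Lab : Type}

/-- The set of initial labels of a process. -/
def initials (L : LTS Lab) (p : L.Proc) : Set Lab :=
  {U | ∃ q, L.Trans p U q}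

/-- The stratified relations `⊑^P_n` relative to a set `P` of labels. -/
def strat (L : LTS Lab) (P : Set Lab) : ℕ → L.Proc → L.Proc → Prop
  | 0, _, _ => True
  | n + 1, p, q =>
      (∀ U ∈ P, ∀ p', L.Trans p U p' → ∃ q', L.Trans q U q' ∧ L.strat P n p' q') ∧
      (L.initials p ⊆ P → ¬ L.Div p →
        L.initials q ⊆ P ∧ ¬ L.Div q ∧
        ∀ U ∈ P, ∀ q', L.Trans q U q' → ∃ p', L.Trans p U p' ∧ L.strat P n p' q')

/-- `p ⊑^P_ω q` : `p ⊑^P_n q` for all `n`. -/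
def stratOmega (L : LTS Lab) (P : Set Lab) (p q : L.Proc) : Prop :=
  ∀ n, L.strat P n p q

/-- `p ⊑^fin_ω q` : `p ⊑^P_ω q` for every finite set of labels `P`. -/
def finOmega (L : LTS Lab) (p q : L.Proc) : Prop :=
  ∀ P : Set Lab, P.Finite → L.stratOmega P p q

/-- The functional `F` on binary relations over processes. -/
def F (L : LTS Lab) (R : L.Proc → L.Proc → Prop) (p q : L.Proc) : Prop :=
  ∀ U : Lab,
    (∀ p', L.Trans p U p' → ∃ q', L.Trans q U q' ∧ R p' q') ∧
    (¬ L.Div p → ¬ L.Div q ∧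
      ∀ q', L.Trans q U q' → ∃ p', L.Trans p U p' ∧ R p' q')

/-- A relation `R` is a prebisimulation iff `R ⊆ F(R)`. -/
def IsPrebisimulation (L : LTS Lab) (R : L.Proc → L.Proc → Prop) : Prop :=
  ∀ a b, R a b → L.F R a b

/-- `p ≲ q` : `p` and `q` are related by some prebisimulation. -/
def Pre (L : LTS Lab) (p q : L.Proc) : Prop :=
  ∃ R : L.Proc → L.Proc → Prop, L.IsPrebisimulation R ∧ R p q

/-- The iterates `⊑_n` of `F` applied to the total relation. -/
def iter (L : LTS Lab) : ℕ → L.Proc → L.Proc → Prop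
  | 0, _, _ => True
  | n + 1, p, q => L.F (L.iter n) p q

/-- `p ⊑_ω q` : `p ⊑_n q` for all `n`. -/
def preOmega (L : LTS Lab) (p q : L.Proc) : Prop :=
  ∀ n, L.iter n p q

end LTS

/-- Finite synchronization trees over a label type `Lab`: a finite list of summands
`U : t'` together with a flag recording whether `Ω` is a summand. -/
inductive STree (Lab : Type) : Type where
  | node : List (Lab × STree Lab) → Bool → STree Lab

namespace STree

variable {Lab : Type}

/-- The summands `U : t'` of a synchronization tree. -/
def children : STree Lab → List (Lab × STree Lab)
  | node l _ => l

/-- Whether `Ω` is a summand of the synchronization tree. -/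
def omega : STree Lab → Bool
  | node _ b => b

end STree

/-- The disjoint union of the transition system of finite synchronization trees
over `Lab` and a given LTS `L`. -/
def LTS.withTrees {Lab : Type} (L : LTS Lab) : LTS Lab where
  Proc := STree Lab ⊕ L.Proc
  Trans := fun x U y =>
    match x, y with
    | Sum.inl t, Sum.inl t' => (U, t') ∈ t.children
    | Sum.inr p, Sum.inr p' => L.Trans p U p'
    | _, _ => False
  Div := fun x =>
    match x with
    | Sum.inl t => t.omega = true
    | Sum.inr p => L.Div p

namespace LTS

variable {Lab : Type} (L : LTS Lab)

theorem F_mono {R S : L.Proc → L.Proc → Prop} (h : ∀ a b, R a b → S a b) :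
    ∀ p q, L.F R p q → L.F S p q := by
  intro p q hF U
  obtain ⟨h1, h2⟩ := hF U
  refine ⟨fun p' hp' => ?_, fun hd => ?_⟩
  · obtain ⟨q', hq', hr⟩ := h1 p' hp'
    exact ⟨q', hq', h _ _ hr⟩
  · obtain ⟨hdq, h2'⟩ := h2 hd
    exact ⟨hdq, fun q' hq' => by
      obtain ⟨p', hp', hr⟩ := h2' q' hq'
      exact ⟨p', hp', h _ _ hr⟩⟩

theorem iter_succ_le : ∀ n p q, L.iter (n+1) p q → L.iter n p q := by
  intro n
  induction n with
  | zero => intro p q _; trivial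
  | succ n ih => exact fun p q h => L.F_mono ih p q h

theorem iter_le_of_le {m n : ℕ} (h : n ≤ m) : ∀ p q, L.iter m p q → L.iter n p q := by
  induction h with
  | refl => exact fun _ _ h => h
  | step _ ih => exact fun p q hm => ih p q (L.iter_succ_le _ p q hm)

theorem iter_trans : ∀ n (p q r : L.Proc), L.iter n p q → L.iter n q r → L.iter n p r := by
  intro n
  induction n with
  | zero => intro _ _ _ _ _; trivial
  | succ n ih =>
    intro p q r hpq hqr U
    obtain ⟨h1, h2⟩ := hpq U
    obtain ⟨g1, g2⟩ := hqr U
    refine ⟨fun p' hp' => ?_, fun hd => ?_⟩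
    · obtain ⟨q', hq', hr1⟩ := h1 p' hp'
      obtain ⟨r', hr', hr2⟩ := g1 q' hq'
      exact ⟨r', hr', ih _ _ _ hr1 hr2⟩
    · obtain ⟨hdq, h2'⟩ := h2 hd
      obtain ⟨hdr, g2'⟩ := g2 hdq
      refine ⟨hdr, fun r' hr' => ?_⟩
      obtain ⟨q', hq', hr2⟩ := g2' r' hr'
      obtain ⟨p', hp', hr1⟩ := h2' q' hq'
      exact ⟨p', hp', ih _ _ _ hr1 hr2⟩

theorem pre_le_iter : ∀ n p q, L.Pre p q → L.iter n p q := by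
  intro n
  induction n with
  | zero => intro _ _ _; trivial
  | succ n ih =>
    rintro p q ⟨R, hR, hpq⟩
    exact L.F_mono (fun a b hab => ih a b ⟨R, hR, hab⟩) p q (hR p q hpq)

end LTS

namespace STree

variable {Lab : Type}

def depth : STree Lab → ℕ
  | .node l _ => (l.attach.map fun x => depth x.1.2).foldr max 0 + 1
decreasing_by
  obtain ⟨⟨U, t⟩, hmem⟩ := x
  simp only []
  have h1 : sizeOf (U, t) ≤ sizeOf l := (List.sizeOf_lt_of_mem hmem).le
  have h2 : sizeOf t < sizeOf (U, t) := by simp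
  simp only [STree.node.sizeOf_spec]
  omega

end STree

namespace STree
variable {Lab : Type}

theorem depth_pos (t : STree Lab) : 0 < t.depth := by
  cases t with
  | node l b => simp [depth]

theorem le_foldr_max {a : ℕ} : ∀ {l : List ℕ}, a ∈ l → a ≤ l.foldr max 0 := by
  intro l
  induction l with
  | nil => intro h; simp at h
  | cons x xs ih =>
    intro h
    rcases List.mem_cons.1 h with h | h
    · subst h; exact le_max_left _ _
    · exact le_trans (ih h) (le_max_right _ _)

theorem depth_lt_of_mem_children {t t' : STree Lab} {U : Lab}
    (h : (U, t') ∈ t.children) : t'.depth < t.depth := by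
  cases t with
  | node l b =>
    have hmem : t'.depth ∈ l.attach.map fun x => depth x.1.2 :=
      List.mem_map.2 ⟨⟨(U, t'), h⟩, List.mem_attach _ _, rfl⟩
    have := le_foldr_max hmem
    simp only [depth]
    omega

end STree


section Aux

open STree

variable {Lab : Type} (L : LTS Lab)

/-- Lift `L.iter` to the disjoint-union system on `inr`-pairs. -/
theorem iter_lift : ∀ n (p q : L.Proc), L.iter n p q →
    L.withTrees.iter n (Sum.inr p) (Sum.inr q) := by
  intro n
  induction n with
  | zero => intro _ _ _; trivial
  | succ n ih =>
    intro p q h U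
    obtain ⟨h1, h2⟩ := h U
    constructor
    · intro x' hx'
      cases x' with
      | inl t' => exact hx'.elim
      | inr p' =>
        obtain ⟨q', hq', hr⟩ := h1 p' hx'
        exact ⟨Sum.inr q', hq', ih _ _ hr⟩
    · intro hd
      obtain ⟨hdq, h2'⟩ := h2 hd
      refine ⟨hdq, ?_⟩
      intro x' hx'
      cases x' with
      | inl t' => exact hx'.elim
      | inr q' =>
        obtain ⟨p', hp', hr⟩ := h2' q' hx'
        exact ⟨Sum.inr p', hp', ih _ _ hr⟩

/-- Stabilization: on tree-vs-anything pairs, `iter n` implies `iter (n+1)`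
once `n` is at least the depth of the tree. -/
theorem iter_stab : ∀ n (t : STree Lab) (y : L.withTrees.Proc),
    t.depth ≤ n → L.withTrees.iter n (Sum.inl t) y →
    L.withTrees.iter (n + 1) (Sum.inl t) y := by
  intro n
  induction n with
  | zero => intro t y hd _; exact absurd hd (by have := t.depth_pos; omega)
  | succ n ih =>
    intro t y hd h U
    obtain ⟨h1, h2⟩ := h U
    constructor
    · intro x' hx'
      cases x' with
      | inr p' => exact hx'.elim
      | inl t' =>
        have hc : (U, t') ∈ t.children := hx'
        obtain ⟨y', hy', hi⟩ := h1 (Sum.inl t') hx'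
        have hlt := depth_lt_of_mem_children hc
        exact ⟨y', hy', ih t' y' (by omega) hi⟩
    · intro hdiv
      obtain ⟨hdy, h2'⟩ := h2 hdiv
      refine ⟨hdy, ?_⟩
      intro y' hy'
      obtain ⟨x', hx', hi⟩ := h2' y' hy'
      cases x' with
      | inr p' => exact hx'.elim
      | inl t' =>
        have hc : (U, t') ∈ t.children := hx'
        have hlt := depth_lt_of_mem_children hc
        exact ⟨Sum.inl t', hx', ih t' y' (by omega) hi⟩

theorem iter_stab_all {n : ℕ} {t : STree Lab} {y : L.withTrees.Proc}
    (hd : t.depth ≤ n) (h : L.withTrees.iter n (Sum.inl t) y) :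
    ∀ m, L.withTrees.iter m (Sum.inl t) y := by
  have hup : ∀ m, n ≤ m → L.withTrees.iter m (Sum.inl t) y := by
    intro m hm
    induction hm with
    | refl => exact h
    | @step k hk ihk => exact iter_stab L k t y (le_trans hd hk) ihk
  intro m
  rcases le_total m n with hmn | hnm
  · exact (L.withTrees).iter_le_of_le hmn _ _ h
  · exact hup m hnm

/-- If all finite approximants hold between a tree and a process, they are
related by a prebisimulation. -/
theorem tree_omega_pre {t : STree Lab} {y : L.withTrees.Proc}
    (hall : ∀ n, L.withTrees.iter n (Sum.inl t) y) :
    L.withTrees.Pre (Sum.inl t) y := by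
  refine ⟨fun x y => ∃ t, x = Sum.inl t ∧ ∀ n, L.withTrees.iter n x y, ?_, t, rfl, hall⟩
  rintro a b ⟨t, rfl, hall⟩ U
  constructor
  · intro x' hx'
    cases x' with
    | inr p' => exact hx'.elim
    | inl t' =>
      have hc : (U, t') ∈ t.children := hx'
      obtain ⟨h1, _⟩ := hall (t.depth + 1) U
      obtain ⟨y', hy', hi⟩ := h1 (Sum.inl t') hx'
      have hlt := depth_lt_of_mem_children hc
      exact ⟨y', hy', t', rfl, iter_stab_all L (by omega) hi⟩
  · intro hdiv
    have hdy : ¬ L.withTrees.Div b := by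
      obtain ⟨_, h2⟩ := hall 1 U
      exact (h2 hdiv).1
    refine ⟨hdy, ?_⟩
    intro y' hy'
    obtain ⟨_, h2⟩ := hall (t.depth + 1) U
    obtain ⟨_, hb⟩ := h2 hdiv
    obtain ⟨x', hx', hi⟩ := hb y' hy'
    cases x' with
    | inr p' => exact hx'.elim
    | inl t' =>
      have hc : (U, t') ∈ t.children := hx'
      have hlt := depth_lt_of_mem_children hc
      exact ⟨Sum.inl t', hx', t', rfl, iter_stab_all L (by omega) hi⟩

end Aux

theorem preOmega_le_preF_slts (Act : Type) (L : LTS (Multiset Act)) (p q : L.Proc) (h : L.preOmega p q) :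
    ∀ t : STree (Multiset Act),
      L.withTrees.Pre (Sum.inl t) (Sum.inr p) → L.withTrees.Pre (Sum.inl t) (Sum.inr q) := by
  intro t ht
  have h1 : ∀ n, L.withTrees.iter n (Sum.inl t) (Sum.inr p) :=
    fun n => L.withTrees.pre_le_iter n _ _ ht
  have h2 : ∀ n, L.withTrees.iter n (Sum.inr p) (Sum.inr q) :=
    fun n => iter_lift L n p q (h n)
  exact tree_omega_pre L fun n => L.withTrees.iter_trans n _ _ _ (h1 n) (h2 n)
end

section
/- For every finitely branching step labelled transition system with divergence (i.e., one in which for every process p the set {(U, q) | p →^U q} is finite) and all processes p, q: p ⊑_ω q implies p ≲ q; consequently in finitely branching systems ≲, ⊑_ω, and ≲^F all coincide. -/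
section Aux

open Classical

variable {Lab : Type} (L : LTS Lab)

theorem LTS.F_mono_s19 {R R' : L.Proc → L.Proc → Prop} (h : ∀ a b, R a b → R' a b)
    {p q : L.Proc} (hpq : L.F R p q) : L.F R' p q := by
  intro U
  obtain ⟨h1, h2⟩ := hpq U
  refine ⟨fun p' hp' => ?_, fun hd => ?_⟩
  · obtain ⟨q', hq', hr⟩ := h1 p' hp'
    exact ⟨q', hq', h _ _ hr⟩
  · obtain ⟨hdq, h2'⟩ := h2 hd
    refine ⟨hdq, fun q' hq' => ?_⟩
    obtain ⟨p', hp', hr⟩ := h2' q' hq'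
    exact ⟨p', hp', h _ _ hr⟩

theorem LTS.iter_succ_le_s19 : ∀ (n : ℕ) {p q : L.Proc}, L.iter (n + 1) p q → L.iter n p q
  | 0, _, _, _ => trivial
  | n + 1, p, q, h => L.F_mono_s19 (fun a b hab => LTS.iter_succ_le_s19 n hab) h

theorem LTS.iter_le {m n : ℕ} (h : m ≤ n) {p q : L.Proc} : L.iter n p q → L.iter m p q := by
  induction h with
  | refl => exact fun h => h
  | step _ ih => exact fun hn => ih (L.iter_succ_le_s19 _ hn)

theorem LTS.pre_iter {R : L.Proc → L.Proc → Prop} (hR : L.IsPrebisimulation R) :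
    ∀ (n : ℕ) (p q : L.Proc), R p q → L.iter n p q
  | 0, _, _, _ => trivial
  | n + 1, p, q, h => L.F_mono_s19 (fun a b hab => LTS.pre_iter hR n a b hab) (hR p q h)

/-- Pigeonhole: a sequence into a finite set with decreasing properties has a
value satisfying all the properties. -/
theorem pigeon {α : Type*} {S : Set α} (hS : S.Finite) (g : ℕ → α) (hg : ∀ n, g n ∈ S)
    (P : ℕ → α → Prop) (hP : ∀ n, P n (g n))
    (hmono : ∀ m n a, m ≤ n → P n a → P m a) : ∃ a ∈ S, ∀ n, P n a := by
  haveI : Finite S := hS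
  let f : ℕ → S := fun n => ⟨g n, hg n⟩
  obtain ⟨y, hy⟩ := Finite.exists_infinite_fiber f
  have hinf : (f ⁻¹' {y}).Infinite := Set.infinite_coe_iff.mp hy
  refine ⟨y.1, y.2, fun n => ?_⟩
  obtain ⟨m, hm, hlt⟩ := hinf.exists_gt n
  have hgm : g m = y.1 := congrArg Subtype.val hm
  exact hmono n m _ (le_of_lt hlt) (hgm ▸ hP m)

theorem succ_finite (hfb : ∀ p : L.Proc, {x : Lab × L.Proc | L.Trans p x.1 x.2}.Finite)
    (p : L.Proc) (U : Lab) : {q' | L.Trans p U q'}.Finite :=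
  ((hfb p).image Prod.snd).subset (fun q' hq' => ⟨(U, q'), hq', rfl⟩)

theorem preOmega_prebisim (hfb : ∀ p : L.Proc, {x : Lab × L.Proc | L.Trans p x.1 x.2}.Finite) :
    L.IsPrebisimulation L.preOmega := by
  intro p q hpq U
  constructor
  · intro p' hp'
    have hex : ∀ n, ∃ q', L.Trans q U q' ∧ L.iter n p' q' := fun n => (hpq (n + 1) U).1 p' hp'
    choose g hg1 hg2 using hex
    obtain ⟨q', hq'S, hq'⟩ := pigeon (succ_finite L hfb q U) g hg1 (fun n a => L.iter n p' a) hg2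
      (fun m n a h => L.iter_le h)
    exact ⟨q', hq'S, hq'⟩
  · intro hd
    have hnd : ¬ L.Div q := ((hpq 1 U).2 hd).1
    refine ⟨hnd, fun q' hq' => ?_⟩
    have hex : ∀ n, ∃ p', L.Trans p U p' ∧ L.iter n p' q' :=
      fun n => ((hpq (n + 1) U).2 hd).2 q' hq'
    choose g hg1 hg2 using hex
    obtain ⟨p', hS, hall⟩ := pigeon (succ_finite L hfb p U) g hg1 (fun n a => L.iter n a q') hg2
      (fun m n a h => L.iter_le h)
    exact ⟨p', hS, hall⟩

theorem comp_prebisim {S R : L.Proc → L.Proc → Prop} (hS : L.IsPrebisimulation S)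
    (hR : L.IsPrebisimulation R) :
    L.IsPrebisimulation (fun a c => ∃ b, S a b ∧ R b c) := by
  rintro a c ⟨b, hab, hbc⟩ U
  obtain ⟨hS1, hS2⟩ := hS a b hab U
  obtain ⟨hR1, hR2⟩ := hR b c hbc U
  constructor
  · intro a' ha'
    obtain ⟨b', hb', hSab⟩ := hS1 a' ha'
    obtain ⟨c', hc', hRbc⟩ := hR1 b' hb'
    exact ⟨c', hc', b', hSab, hRbc⟩
  · intro hda
    obtain ⟨hdb, hS2'⟩ := hS2 hda
    obtain ⟨hdc, hR2'⟩ := hR2 hdb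
    refine ⟨hdc, fun c' hc' => ?_⟩
    obtain ⟨b', hb', hRbc⟩ := hR2' c' hc'
    obtain ⟨a', ha', hSab⟩ := hS2' b' hb'
    exact ⟨a', ha', b', hSab, hRbc⟩

theorem pre_trans {a b c : L.Proc} (h1 : L.Pre a b) (h2 : L.Pre b c) : L.Pre a c := by
  obtain ⟨S, hS, hab⟩ := h1
  obtain ⟨R, hR, hbc⟩ := h2
  exact ⟨_, comp_prebisim L hS hR, b, hab, hbc⟩

/-- The lift of a prebisimulation on `L` to `L.withTrees` along `Sum.inr`. -/
theorem pre_lift {a b : L.Proc} (h : L.Pre a b) :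
    L.withTrees.Pre (Sum.inr a) (Sum.inr b) := by
  obtain ⟨R, hR, hab⟩ := h
  refine ⟨fun x y => ∃ a b, x = Sum.inr a ∧ y = Sum.inr b ∧ R a b, ?_, a, b, rfl, rfl, hab⟩
  rintro _ _ ⟨a, b, rfl, rfl, hab⟩ U
  obtain ⟨h1, h2⟩ := hR a b hab U
  constructor
  · intro x' hx'
    cases x' with
    | inl t => exact absurd hx' (by exact fun h => h)
    | inr a' =>
      obtain ⟨b', hb', hr⟩ := h1 a' hx'
      exact ⟨Sum.inr b', hb', a', b', rfl, rfl, hr⟩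
  · intro hda
    obtain ⟨hdb, h2'⟩ := h2 hda
    refine ⟨hdb, fun y' hy' => ?_⟩
    cases y' with
    | inl t => exact absurd hy' (by exact fun h => h)
    | inr b' =>
      obtain ⟨a', ha', hr⟩ := h2' b' hy'
      exact ⟨Sum.inr a', ha', a', b', rfl, rfl, hr⟩

/-- Characteristic trees. -/
noncomputable def ctree (hfb : ∀ p : L.Proc, {x : Lab × L.Proc | L.Trans p x.1 x.2}.Finite) :
    ℕ → L.Proc → STree Lab
  | 0, _ => .node [] true
  | n + 1, p =>
      .node (((hfb p).toFinset.toList).map fun x => (x.1, ctree hfb n x.2))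
        (if L.Div p then true else false)

variable (hfb : ∀ p : L.Proc, {x : Lab × L.Proc | L.Trans p x.1 x.2}.Finite)

theorem ctree_mem {n : ℕ} {p : L.Proc} {U : Lab} {t' : STree Lab} :
    (U, t') ∈ (ctree L hfb (n + 1) p).children ↔
      ∃ p', L.Trans p U p' ∧ t' = ctree L hfb n p' := by
  simp only [ctree, STree.children, List.mem_map, Finset.mem_toList,
    Set.Finite.mem_toFinset, Set.mem_setOf_eq, Prod.mk.injEq]
  constructor
  · rintro ⟨⟨V, p'⟩, htr, rfl, rfl⟩
    exact ⟨p', htr, rfl⟩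
  · rintro ⟨p', htr, rfl⟩
    exact ⟨(U, p'), htr, rfl, rfl⟩

theorem ctree_omega {n : ℕ} {p : L.Proc} :
    (ctree L hfb (n + 1) p).omega = true ↔ L.Div p := by
  simp only [ctree, STree.omega]
  split <;> simp_all

theorem ctree_le_self (n : ℕ) (p : L.Proc) :
    L.withTrees.Pre (Sum.inl (ctree L hfb n p)) (Sum.inr p) := by
  refine ⟨fun x y => ∃ m a, x = Sum.inl (ctree L hfb m a) ∧ y = Sum.inr a, ?_,
    n, p, rfl, rfl⟩
  rintro _ _ ⟨m, a, rfl, rfl⟩ U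
  constructor
  · intro x' hx'
    cases x' with
    | inr b => exact absurd hx' (by exact fun h => h)
    | inl t' =>
      have hx'' : (U, t') ∈ (ctree L hfb m a).children := hx'
      cases m with
      | zero => simp [ctree, STree.children] at hx''
      | succ m =>
        obtain ⟨a', htr, rfl⟩ := (ctree_mem L hfb).mp hx''
        exact ⟨Sum.inr a', htr, m, a', rfl, rfl⟩
  · intro hd
    cases m with
    | zero => exact absurd rfl hd
    | succ m =>
      have hnd : ¬ L.Div a := fun h => hd ((ctree_omega L hfb).mpr h)
      refine ⟨hnd, fun y' hy' => ?_⟩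
      cases y' with
      | inl t => exact absurd hy' (by exact fun h => h)
      | inr a' =>
        have htr : L.Trans a U a' := hy'
        refine ⟨Sum.inl (ctree L hfb m a'), ?_, m, a', rfl, rfl⟩
        exact (ctree_mem L hfb).mpr ⟨a', htr, rfl⟩

theorem ctree_sound : ∀ (n : ℕ) (p q : L.Proc),
    L.withTrees.Pre (Sum.inl (ctree L hfb n p)) (Sum.inr q) → L.iter n p q := by
  intro n
  induction n with
  | zero => intro p q _; trivial
  | succ n ih =>
    rintro p q ⟨S, hSpre, hS⟩ U
    obtain ⟨h1, h2⟩ := hSpre _ _ hS U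
    constructor
    · intro p' hp'
      have hmem : L.withTrees.Trans (Sum.inl (ctree L hfb (n + 1) p)) U
          (Sum.inl (ctree L hfb n p')) := (ctree_mem L hfb).mpr ⟨p', hp', rfl⟩
      obtain ⟨y', hy', hr⟩ := h1 _ hmem
      cases y' with
      | inl t => exact absurd hy' (by exact fun h => h)
      | inr q' => exact ⟨q', hy', ih p' q' ⟨S, hSpre, hr⟩⟩
    · intro hdp
      have hnd : ¬ L.withTrees.Div (Sum.inl (ctree L hfb (n + 1) p)) :=
        fun h => hdp ((ctree_omega L hfb).mp h)
      obtain ⟨hdq, h2'⟩ := h2 hnd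
      refine ⟨hdq, fun q' hq' => ?_⟩
      obtain ⟨x', hx', hr⟩ := h2' (Sum.inr q') hq'
      cases x' with
      | inr b => exact absurd hx' (by exact fun h => h)
      | inl t' =>
        obtain ⟨p', hp', rfl⟩ := (ctree_mem L hfb).mp hx'
        exact ⟨p', hp', ih p' q' ⟨S, hSpre, hr⟩⟩

end Aux

theorem finitely_branching_collapse_slts (Act : Type) (L : LTS (Multiset Act))
    (hfb : ∀ p : L.Proc, {x : Multiset Act × L.Proc | L.Trans p x.1 x.2}.Finite) (p q : L.Proc) :
    (L.preOmega p q → L.Pre p q) ∧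
    (L.Pre p q ↔ L.preOmega p q) ∧
    (L.Pre p q ↔
      ∀ t : STree (Multiset Act),
        L.withTrees.Pre (Sum.inl t) (Sum.inr p) → L.withTrees.Pre (Sum.inl t) (Sum.inr q)) := by
  have h1 : L.preOmega p q → L.Pre p q :=
    fun h => ⟨L.preOmega, preOmega_prebisim L hfb, h⟩
  have h2 : L.Pre p q → L.preOmega p q := by
    rintro ⟨R, hR, hpq⟩ n
    exact L.pre_iter hR n p q hpq
  refine ⟨h1, ⟨h2, h1⟩, ?_, ?_⟩
  · intro hPre t ht
    exact pre_trans L.withTrees ht (pre_lift L hPre)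
  · intro h
    refine h1 (fun n => ?_)
    exact ctree_sound L hfb n p q (h (ctree L hfb n p) (ctree_le_self L hfb n p))
end
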